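/- arXiv:2506.08824 — 4 statements merged into one kernel-verified Lean document; each statement's English description precedes it below -/
import Mathlib

section
/- For every s ≥ 0, the preimage ι_s^{-1}(I_{g,f}) (equivalently, the intersection I_{g,f} ∩ K[μ, x_1,…,x_n, y^{(0)},…,y^{(s)}]) equals the ideal of B_s generated by y_0 − f, y_1 − L(f), …, y_s − L^s(f), where L^k denotes the k-th iterate of L and the polynomials f, L(f), …, L^s(f) ∈ B are regarded as elements of B_s via the natural inclusion. -/
open MvPolynomial

theorem stmt4 {K : Type*} [Field K] [CharZero K]
    (δ : Derivation ℚ K K) {r n : ℕ} (hn : 1 ≤ n)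
    -- B = K[μ_1,…,μ_r, x_1,…,x_n] with μ-variables `Sum.inl` and x-variables `Sum.inr`
    (g : Fin n → MvPolynomial (Fin r ⊕ Fin n) K) (f : MvPolynomial (Fin r ⊕ Fin n) K)
    -- the Lie derivation L on B
    (L : Derivation ℚ (MvPolynomial (Fin r ⊕ Fin n) K) (MvPolynomial (Fin r ⊕ Fin n) K))
    (hLmu : ∀ j, L (X (Sum.inl j)) = 0)
    (hLx : ∀ i, L (X (Sum.inr i)) = g i)
    (hLC : ∀ c : K, L (C c) = C (δ c))
    -- T = K[μ_j, x_i^{(k)}, y^{(k)}] with variables `inl j`, `inr (inl (i,k))`, `inr (inr k)`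
    (D : Derivation ℚ (MvPolynomial (Fin r ⊕ ((Fin n × ℕ) ⊕ ℕ)) K)
        (MvPolynomial (Fin r ⊕ ((Fin n × ℕ) ⊕ ℕ)) K))
    (hDmu : ∀ j, D (X (Sum.inl j)) = 0)
    (hDx : ∀ (i : Fin n) (k : ℕ),
      D (X (Sum.inr (Sum.inl (i, k)))) = X (Sum.inr (Sum.inl (i, k + 1))))
    (hDy : ∀ k : ℕ, D (X (Sum.inr (Sum.inr k))) = X (Sum.inr (Sum.inr (k + 1))))
    (hDC : ∀ c : K, D (C c) = C (δ c))
    -- the embedding ψ : B → T, μ_j ↦ μ_j, x_i ↦ x_i^{(0)}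
    (ψ : MvPolynomial (Fin r ⊕ Fin n) K →ₐ[K] MvPolynomial (Fin r ⊕ ((Fin n × ℕ) ⊕ ℕ)) K)
    (hψ : ψ = aeval (Sum.elim (fun j => X (Sum.inl j))
        (fun i => X (Sum.inr (Sum.inl (i, 0))))))
    -- the differential ideal I_{g,f} ⊆ T
    (Igf : Ideal (MvPolynomial (Fin r ⊕ ((Fin n × ℕ) ⊕ ℕ)) K))
    (hIgf : Igf = Ideal.span
      ({q | ∃ (k : ℕ) (i : Fin n),
          q = (⇑D)^[k] (X (Sum.inr (Sum.inl (i, 1))) - ψ (g i))} ∪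
        {q | ∃ k : ℕ, q = (⇑D)^[k] (X (Sum.inr (Sum.inr 0)) - ψ f)}))
    (s : ℕ)
    -- B_s = K[μ, x, y_0, …, y_s] and the embedding ι_s : B_s → T
    (ι : MvPolynomial ((Fin r ⊕ Fin n) ⊕ Fin (s + 1)) K →ₐ[K]
        MvPolynomial (Fin r ⊕ ((Fin n × ℕ) ⊕ ℕ)) K)
    (hι : ι = aeval (Sum.elim
        (Sum.elim (fun j => X (Sum.inl j)) (fun i => X (Sum.inr (Sum.inl (i, 0)))))
        (fun k : Fin (s + 1) => X (Sum.inr (Sum.inr (k : ℕ))))))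
    -- the natural inclusion B → B_s
    (emb : MvPolynomial (Fin r ⊕ Fin n) K →ₐ[K]
        MvPolynomial ((Fin r ⊕ Fin n) ⊕ Fin (s + 1)) K)
    (hemb : emb = aeval (fun v => X (Sum.inl v))) :
    Ideal.comap ι Igf =
      Ideal.span (Set.range fun k : Fin (s + 1) =>
        (X (Sum.inr k) : MvPolynomial ((Fin r ⊕ Fin n) ⊕ Fin (s + 1)) K) -
          emb ((⇑L)^[(k : ℕ)] f)) := by
  -- The retraction Φ : T → B, μ_j ↦ μ_j, x_i^{(k)} ↦ L^k(x_i), y^{(k)} ↦ L^k(f)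
  set Φ : MvPolynomial (Fin r ⊕ ((Fin n × ℕ) ⊕ ℕ)) K →ₐ[K] MvPolynomial (Fin r ⊕ Fin n) K :=
    aeval (Sum.elim (fun j => X (Sum.inl j))
      (Sum.elim (fun p : Fin n × ℕ => (⇑L)^[p.2] (X (Sum.inr p.1)))
        (fun k : ℕ => (⇑L)^[k] f))) with hΦdef
  -- Φ intertwines D and L
  have hΦX : ∀ v, Φ (D (X v)) = L (Φ (X v)) := by
    rintro (j | ⟨i, k⟩ | k)
    · simp [hΦdef, hDmu, hLmu]
    · simp [hΦdef, hDx, Function.iterate_succ_apply']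
    · simp [hΦdef, hDy, Function.iterate_succ_apply']
  have hΦD : ∀ p, Φ (D p) = L (Φ p) := by
    intro p
    induction p using MvPolynomial.induction_on with
    | C a => simp [hΦdef, hDC, hLC]
    | add p q hp hq => simp [map_add, hp, hq]
    | mul_X p v hp =>
      rw [D.leibniz, smul_eq_mul, smul_eq_mul, map_add, map_mul, map_mul, map_mul, L.leibniz,
        smul_eq_mul, smul_eq_mul, hp, hΦX]
  have hΦDk : ∀ (k : ℕ) p, Φ ((⇑D)^[k] p) = (⇑L)^[k] (Φ p) := by
    intro k
    induction k with
    | zero => simp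
    | succ k ih =>
      intro p
      rw [Function.iterate_succ_apply, ih, hΦD, ← Function.iterate_succ_apply,
        Function.iterate_succ_apply']
  -- Φ ∘ ψ = id
  have hΦψ : ∀ p, Φ (ψ p) = p := by
    have : Φ.comp ψ = AlgHom.id K _ := by
      apply MvPolynomial.algHom_ext
      rintro (j | i) <;> simp [hψ, hΦdef]
    intro p
    exact congrArg (fun h : _ →ₐ[K] _ => h p) this
  -- Φ kills Igf
  have hΦIgf : ∀ q ∈ Igf, Φ q = 0 := by
    have hker : Igf ≤ RingHom.ker Φ.toRingHom := by
      rw [hIgf, Ideal.span_le]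
      rintro q (⟨k, i, rfl⟩ | ⟨k, rfl⟩) <;>
        simp only [SetLike.mem_coe, RingHom.mem_ker, AlgHom.toRingHom_eq_coe,
          RingHom.coe_coe, hΦDk, map_sub, hΦψ]
      · have hx1 : Φ (X (Sum.inr (Sum.inl (i, 1)))) = g i := by
          simp [hΦdef, hLx]
        rw [hx1, sub_self]
        exact Function.iterate_fixed (map_zero L) k
      · have hy0 : Φ (X (Sum.inr (Sum.inr 0))) = f := by simp [hΦdef]
        rw [hy0, sub_self]
        exact Function.iterate_fixed (map_zero L) k
    intro q hq
    exact hker hq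
  -- Igf is a differential ideal
  have hDIgf : ∀ q ∈ Igf, D q ∈ Igf := by
    intro q hq
    rw [hIgf] at hq ⊢
    refine Submodule.span_induction ?_ ?_ ?_ ?_ hq
    · rintro x (⟨k, i, rfl⟩ | ⟨k, rfl⟩)
      · exact Ideal.subset_span (Or.inl ⟨k + 1, i, (Function.iterate_succ_apply' _ _ _).symm⟩)
      · exact Ideal.subset_span (Or.inr ⟨k + 1, (Function.iterate_succ_apply' _ _ _).symm⟩)
    · simp
    · intro x y _ _ hx hy
      rw [map_add]; exact Ideal.add_mem _ hx hy
    · intro a x hx hDx'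
      rw [smul_eq_mul, D.leibniz, smul_eq_mul, smul_eq_mul]
      exact Ideal.add_mem _ (Ideal.mul_mem_left _ _ hDx')
        (Ideal.mul_mem_right _ _ hx)
  -- D ∘ ψ ≡ ψ ∘ L mod Igf
  have hψL : ∀ p, D (ψ p) - ψ (L p) ∈ Igf := by
    intro p
    induction p using MvPolynomial.induction_on with
    | C a => simp [hψ, hDC, hLC]
    | add p q hp hq =>
      have h := Ideal.add_mem _ hp hq
      simp only [map_add]
      convert h using 1
      ring
    | mul_X p v hp =>
      have hgen : D (ψ (X v)) - ψ (L (X v)) ∈ Igf := by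
        rcases v with j | i
        · simp [hψ, hDmu, hLmu]
        · have h1 : ψ (X (Sum.inr i : Fin r ⊕ Fin n)) = X (Sum.inr (Sum.inl (i, 0))) := by
            simp [hψ]
          rw [h1, hDx, hLx]
          rw [hIgf]
          exact Ideal.subset_span (Or.inl ⟨0, i, rfl⟩)
      have key : D (ψ (p * X v)) - ψ (L (p * X v)) =
          ψ p * (D (ψ (X v)) - ψ (L (X v))) + ψ (X v) * (D (ψ p) - ψ (L p)) := by
        simp only [map_mul, Derivation.leibniz, smul_eq_mul, map_add, map_mul]
        ring
      rw [key]
      exact Ideal.add_mem _ (Ideal.mul_mem_left _ _ hgen) (Ideal.mul_mem_left _ _ hp)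
  -- y^{(k)} - ψ(L^k f) ∈ Igf
  have hyk : ∀ k : ℕ, (X (Sum.inr (Sum.inr k)) : MvPolynomial (Fin r ⊕ ((Fin n × ℕ) ⊕ ℕ)) K)
      - ψ ((⇑L)^[k] f) ∈ Igf := by
    intro k
    induction k with
    | zero =>
      rw [hIgf]
      exact Ideal.subset_span (Or.inr ⟨0, by simp⟩)
    | succ k ih =>
      have h1 := hDIgf _ ih
      rw [map_sub, hDy] at h1
      have h2 := hψL ((⇑L)^[k] f)
      have : (X (Sum.inr (Sum.inr (k + 1))) : MvPolynomial (Fin r ⊕ ((Fin n × ℕ) ⊕ ℕ)) K)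
          - ψ ((⇑L)^[k + 1] f) =
          (X (Sum.inr (Sum.inr (k + 1))) - D (ψ ((⇑L)^[k] f)))
            + (D (ψ ((⇑L)^[k] f)) - ψ (L ((⇑L)^[k] f))) := by
        rw [Function.iterate_succ_apply']; ring
      rw [this]
      exact Ideal.add_mem _ h1 h2
  -- ι ∘ emb = ψ
  have hιemb : ∀ p, ι (emb p) = ψ p := by
    have : ι.comp emb = ψ := by
      apply MvPolynomial.algHom_ext
      rintro (j | i) <;> simp [hι, hemb, hψ]
    intro p
    exact congrArg (fun h : _ →ₐ[K] _ => h p) this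
  apply le_antisymm
  · -- comap ι Igf ≤ span
    intro p hp
    have h0 : Φ (ι p) = 0 := hΦIgf _ hp
    set J := Ideal.span (Set.range fun k : Fin (s + 1) =>
      (X (Sum.inr k) : MvPolynomial ((Fin r ⊕ Fin n) ⊕ Fin (s + 1)) K) -
        emb ((⇑L)^[(k : ℕ)] f)) with hJdef
    have hcomp : (Ideal.Quotient.mkₐ K J).comp (emb.comp (Φ.comp ι))
        = Ideal.Quotient.mkₐ K J := by
      apply MvPolynomial.algHom_ext
      rintro ((j | i) | k)
      · simp [hι, hΦdef, hemb]
      · simp [hι, hΦdef, hemb]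
      · have h1 : ι (X (Sum.inr k : (Fin r ⊕ Fin n) ⊕ Fin (s + 1)))
            = X (Sum.inr (Sum.inr (k : ℕ))) := by simp [hι]
        have h2 : Φ (X (Sum.inr (Sum.inr (k : ℕ)) : Fin r ⊕ ((Fin n × ℕ) ⊕ ℕ)))
            = (⇑L)^[(k : ℕ)] f := by simp [hΦdef]
        simp only [AlgHom.coe_comp, Function.comp_apply, h1, h2, Ideal.Quotient.mkₐ_eq_mk]
        rw [Ideal.Quotient.eq, ← neg_sub]
        exact neg_mem (Ideal.subset_span ⟨k, rfl⟩)
    have hmk : Ideal.Quotient.mk J p = Ideal.Quotient.mk J (emb (Φ (ι p))) := by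
      have := congrArg (fun h : _ →ₐ[K] _ => h p) hcomp
      simpa using this.symm
    rw [h0, map_zero, map_zero] at hmk
    exact (Ideal.Quotient.eq_zero_iff_mem).mp hmk
  · -- span ≤ comap ι Igf
    rw [Ideal.span_le]
    rintro q ⟨k, rfl⟩
    show ι _ ∈ Igf
    rw [map_sub, hιemb]
    have h1 : ι (X (Sum.inr k : (Fin r ⊕ Fin n) ⊕ Fin (s + 1)))
        = X (Sum.inr (Sum.inr (k : ℕ))) := by simp [hι]
    rw [h1]
    exact hyk (k : ℕ)
end

section
/- Suppose ν ∈ ℕ is such that ker φ_{ν'} = 0 for every ν' < ν and ker φ_ν ≠ 0. Then ker φ_ν is a principal ideal, i.e., there exists P ∈ K[μ_1,…,μ_r, y_0,…,y_ν] with ker φ_ν = (P). (In the language of the paper: the minimal polynomial f_min, whose order is s := ν, generates the principal ideal (y − f, y' − L(f), …, y^{(s)} − L^s(f)) ∩ K[μ, y, y', …, y^{(s)}].) -/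
/-!
The kernel `P` of `φ_ν` is a nonzero prime ideal. Viewing `K[μ, y_0, …, y_ν]` as the
polynomial ring `A[y_ν]` over the UFD `A = K[μ, y_0, …, y_{ν-1}]`, minimality of `ν` says
`P ∩ A = 0`. Such a prime contains a prime element `p`, necessarily of positive degree and
hence primitive. Over the fraction field `F` of `A`, the extension `P F[y_ν]` is still a
proper ideal, so it equals the maximal ideal `(p)`, and Gauss's lemma pulls `p ∣ q` in
`F[y_ν]` back to `A[y_ν]`: `P = (p)`.
-/

open MvPolynomial

/-- The `K`-algebra homomorphism `φ_ν : K[μ_1,…,μ_r, y_0,…,y_ν] → K[μ, x]`,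
sending `μ_j ↦ μ_j` and `y_k ↦ L^k(f)`. -/
noncomputable def liePhi {K : Type*} [Field K] [CharZero K] {r n : ℕ}
    (f : MvPolynomial (Fin r ⊕ Fin n) K)
    (L : Derivation ℚ (MvPolynomial (Fin r ⊕ Fin n) K) (MvPolynomial (Fin r ⊕ Fin n) K))
    (ν : ℕ) :
    MvPolynomial (Fin r ⊕ Fin (ν + 1)) K →ₐ[K] MvPolynomial (Fin r ⊕ Fin n) K :=
  aeval (Sum.elim (fun j => X (Sum.inl j)) (fun k : Fin (ν + 1) => (⇑L)^[(k : ℕ)] f))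

namespace Polynomial

attribute [local instance] Polynomial.algebra Polynomial.isLocalization

theorem isPrincipal_of_isPrime_of_comap_C_eq_bot {R : Type*} [CommRing R] [IsDomain R]
    [UniqueFactorizationMonoid R] {P : Ideal R[X]} (hP : P.IsPrime) (hP0 : P ≠ ⊥)
    (hC : P.comap C = ⊥) : P.IsPrincipal := by
  let F := FractionRing R
  obtain ⟨p, hpP, hp⟩ := hP.exists_mem_prime_of_ne_bot hP0
  have hC' : ∀ c : R, C c ∈ P → c = 0 := fun c hc => by
    simpa [hC] using (show c ∈ P.comap C from hc)
  have hdeg : p.natDegree ≠ 0 := fun h => hp.ne_zero <| by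
    rw [eq_C_of_natDegree_eq_zero h] at hpP ⊢
    rw [hC' _ hpP, map_zero]
  have hprim : p.IsPrimitive := hp.irreducible.isPrimitive hdeg
  have hdisj : Disjoint ((nonZeroDivisors R).map C : Set R[X]) P := by
    rw [Set.disjoint_left]
    rintro _ ⟨c, hc, rfl⟩ hcP
    exact nonZeroDivisors.ne_zero hc (hC' c hcP)
  have hPF : (P.map (algebraMap R[X] F[X])).IsPrime :=
    IsLocalization.isPrime_of_isPrime_disjoint _ F[X] P hP hdisj
  have hirr : Irreducible (p.map (algebraMap R F)) :=
    hprim.irreducible_iff_irreducible_map_fraction_map.1 hp.irreducible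
  have hspan : Ideal.span {p.map (algebraMap R F)} = P.map (algebraMap R[X] F[X]) :=
    (PrincipalIdealRing.isMaximal_of_irreducible hirr).eq_of_le hPF.ne_top
      ((Ideal.span_singleton_le_iff_mem _).2 (Ideal.mem_map_of_mem _ hpP))
  refine ⟨p, le_antisymm (fun q hq => ?_) ((Ideal.span_singleton_le_iff_mem _).2 hpP)⟩
  rw [Ideal.submodule_span_eq, Ideal.mem_span_singleton,
    hprim.dvd_iff_fraction_map_dvd_fraction_map F, ← Ideal.mem_span_singleton, hspan]
  exact Ideal.mem_map_of_mem _ hq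

end Polynomial

namespace MvPolynomial

theorem isPrincipal_ker_of_injective_comp_rename {R S σ τ : Type*} [CommRing R] [IsDomain R]
    [UniqueFactorizationMonoid R] [CommRing S] [IsDomain S] [Algebra R S] (e : τ ≃ Option σ)
    (φ : MvPolynomial τ R →ₐ[R] S)
    (hinj : Function.Injective (φ.comp (rename (e.symm ∘ some))))
    (hker : RingHom.ker φ ≠ ⊥) : (RingHom.ker φ).IsPrincipal := by
  let E := ((renameEquiv R e).trans (optionEquivLeft R σ)).toRingEquiv
  let ψ : Polynomial (MvPolynomial σ R) →+* S := (φ : _ →+* S).comp E.symm.toRingHom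
  have hψ : RingHom.ker φ = (RingHom.ker ψ).comap E := by
    ext x; simp [ψ]
  have hψC : ψ.comp Polynomial.C = (φ.comp (rename (e.symm ∘ some)) : _ →+* S) := by
    apply MvPolynomial.ringHom_ext <;> intro <;> simp [ψ, E, optionEquivLeft_symm_C_C,
      optionEquivLeft_symm_C_X]
  rw [hψ, ← Ideal.map_symm]
  refine Submodule.IsPrincipal.map_ringHom _ <|
    Polynomial.isPrincipal_of_isPrime_of_comap_C_eq_bot (RingHom.ker_isPrime ψ) ?_ ?_
  · rintro h
    exact hker (by rw [hψ, h, Ideal.comap_bot_of_injective _ E.injective])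
  · rw [RingHom.comap_ker, hψC]
    exact (RingHom.injective_iff_ker_eq_bot _).1 hinj

end MvPolynomial

def Equiv.sumFinSuccEquivOption (α : Type*) (ν : ℕ) : α ⊕ Fin (ν + 1) ≃ Option (α ⊕ Fin ν) :=
  ((Equiv.sumCongr (.refl α) (finSuccEquivLast.trans (Equiv.optionEquivSumPUnit.{0} _))).trans
    (Equiv.sumAssoc _ _ _).symm).trans (Equiv.optionEquivSumPUnit.{0} _).symm

theorem Equiv.sumFinSuccEquivOption_symm_comp_some (α : Type*) (ν : ℕ) :
    (Equiv.sumFinSuccEquivOption α ν).symm ∘ some = Sum.map id Fin.castSucc := by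
  funext v; rcases v with a | k <;> simp [Equiv.sumFinSuccEquivOption]

section liePhi

variable {K : Type*} [Field K] [CharZero K] {r n : ℕ} (f : MvPolynomial (Fin r ⊕ Fin n) K)
  (L : Derivation ℚ (MvPolynomial (Fin r ⊕ Fin n) K) (MvPolynomial (Fin r ⊕ Fin n) K))

theorem liePhi_comp_rename_castSucc (ν : ℕ) :
    (liePhi f L (ν + 1)).comp (rename (Sum.map id Fin.castSucc)) = liePhi f L ν := by
  apply algHom_ext
  rintro (j | k) <;> simp [liePhi]

theorem injective_liePhi_comp_rename_castSucc {ν : ℕ}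
    (hinj : ∀ ν' < ν, RingHom.ker (liePhi f L ν') = ⊥) :
    Function.Injective ((liePhi f L ν).comp (rename (Sum.map id Fin.castSucc))) := by
  cases ν with
  | zero =>
    have hμ : (liePhi f L 0).comp (rename (Sum.map id Fin.castSucc)) =
        rename (Sum.map id finZeroElim) := by
      apply algHom_ext
      rintro (j | k)
      · simp [liePhi]
      · exact k.elim0
    rw [hμ]
    exact rename_injective _ <|
      Sum.map_injective.2 ⟨Function.injective_id, Function.injective_of_subsingleton _⟩
  | succ ν =>
    rw [liePhi_comp_rename_castSucc]
    exact (RingHom.injective_iff_ker_eq_bot _).2 (hinj ν ν.lt_succ_self)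

end liePhi

theorem stmt5_general {K : Type*} [Field K] [CharZero K] {r n : ℕ}
    (f : MvPolynomial (Fin r ⊕ Fin n) K)
    (L : Derivation ℚ (MvPolynomial (Fin r ⊕ Fin n) K) (MvPolynomial (Fin r ⊕ Fin n) K))
    (ν : ℕ)
    (hinj : ∀ ν' < ν, RingHom.ker (liePhi f L ν') = ⊥)
    (hker : RingHom.ker (liePhi f L ν) ≠ ⊥) :
    ∃ P : MvPolynomial (Fin r ⊕ Fin (ν + 1)) K,
      RingHom.ker (liePhi f L ν) = Ideal.span {P} := by
  have hsub := injective_liePhi_comp_rename_castSucc f L hinj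
  rw [← Equiv.sumFinSuccEquivOption_symm_comp_some] at hsub
  obtain ⟨P, hP⟩ :=
    isPrincipal_ker_of_injective_comp_rename (Equiv.sumFinSuccEquivOption (Fin r) ν) _ hsub hker
  exact ⟨P, hP⟩

theorem stmt5 {K : Type*} [Field K] [CharZero K] {r n : ℕ} (hn : 1 ≤ n)
    (g : Fin n → MvPolynomial (Fin r ⊕ Fin n) K) (f : MvPolynomial (Fin r ⊕ Fin n) K)
    (L : Derivation ℚ (MvPolynomial (Fin r ⊕ Fin n) K) (MvPolynomial (Fin r ⊕ Fin n) K))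
    (hLx : ∀ i, L (X (Sum.inr i)) = g i)
    (hLmu : ∀ j, L (X (Sum.inl j)) = 0)
    (hLC : ∀ c : K, ∃ c' : K, L (C c) = C c')
    (ν : ℕ)
    (hinj : ∀ ν' < ν, RingHom.ker (liePhi f L ν') = ⊥)
    (hker : RingHom.ker (liePhi f L ν) ≠ ⊥) :
    ∃ P : MvPolynomial (Fin r ⊕ Fin (ν + 1)) K,
      RingHom.ker (liePhi f L ν) = Ideal.span {P} :=
  stmt5_general f L ν hinj hker
end

section
/- Assume D_x ≥ 1. Then for every i ∈ ℕ and every monomial μ^α x^β occurring in L^i(f) (the i-th iterate of L applied to f), the following inequalities hold: |α| ≤ d_μ + i·D_μ and |β| + i ≤ d_x + i·D_x (i.e., |β| ≤ d_x + i·(D_x − 1)). -/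
open MvPolynomial

/-- Total degree of `p` with respect to the `μ`-variables (indexed by `Sum.inl`). -/
noncomputable def degMu {K : Type*} [CommSemiring K] {r n : ℕ}
    (p : MvPolynomial (Fin r ⊕ Fin n) K) : ℕ :=
  p.support.sup fun m => ∑ j : Fin r, m (Sum.inl j)

/-- Total degree of `p` with respect to the `x`-variables (indexed by `Sum.inr`). -/
noncomputable def degXv {K : Type*} [CommSemiring K] {r n : ℕ}
    (p : MvPolynomial (Fin r ⊕ Fin n) K) : ℕ :=
  p.support.sup fun m => ∑ i : Fin n, m (Sum.inr i)

/-!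
Weight the variables by `w` and fix `a ≤ b`. If every monomial of `D (X s)` has weight at most
`w s + b - a` and `D` maps constants to constants, the Leibniz rule shows that `D` raises the
weight of every monomial by at most `b - a`, so `D^[i]` raises it by at most `i * (b - a)`.
The theorem is the case of weight `1` on the parameters with `(a, b) = (0, D_μ)`, together with
the case of weight `1` on the states with `(a, b) = (1, D_x)`: differentiating a monomial removes
one state variable before `g_i` is multiplied in.
-/

open Finsupp

namespace MvPolynomial

variable {σ R : Type*} [CommSemiring R]

lemma exists_mem_support_eq_add_of_mem_support_monomial_mul {m m' : σ →₀ ℕ} {c : R}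
    {q : MvPolynomial σ R} (h : m' ∈ (monomial m c * q).support) :
    ∃ m'' ∈ q.support, m' = m + m'' := by
  classical
  obtain ⟨a, ha, m'', hm'', rfl⟩ := Finset.mem_add.mp (support_mul _ _ h)
  obtain rfl := Finset.mem_singleton.mp (support_monomial_subset ha)
  exact ⟨m'', hm'', rfl⟩

variable {S : Type*} [CommSemiring S] [Algebra S (MvPolynomial σ R)]
  (D : Derivation S (MvPolynomial σ R) (MvPolynomial σ R)) (w : σ → ℕ) {a b : ℕ}

lemma weight_add_le_of_mem_support_derivation_monomial_one
    (hX : ∀ s, ∀ m' ∈ (D (X s)).support, weight w m' + a ≤ w s + b) (m : σ →₀ ℕ) :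
    ∀ m' ∈ (D (monomial m (1 : R))).support, weight w m' + a ≤ weight w m + b := by
  let P : (σ →₀ ℕ) → Prop := fun m =>
    ∀ m' ∈ (D (monomial m (1 : R))).support, weight w m' + a ≤ weight w m + b
  have hzero : P 0 := by
    simp [P, ← C_apply]
  have hadd : ∀ m₁ m₂, P m₁ → P m₂ → P (m₁ + m₂) := by
    classical
    intro m₁ m₂ h₁ h₂ m' hm'
    rw [← one_mul (1 : R), ← monomial_mul, Derivation.leibniz, smul_eq_mul, smul_eq_mul] at hm'
    rcases Finset.mem_union.mp (support_add hm') with hm' | hm'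
    · obtain ⟨m'', hm'', rfl⟩ := exists_mem_support_eq_add_of_mem_support_monomial_mul hm'
      have := h₂ m'' hm''
      simp only [map_add]
      omega
    · obtain ⟨m'', hm'', rfl⟩ := exists_mem_support_eq_add_of_mem_support_monomial_mul hm'
      have := h₁ m'' hm''
      simp only [map_add]
      omega
  change P m
  induction m using Finsupp.induction_linear with
  | zero => exact hzero
  | add m₁ m₂ h₁ h₂ => exact hadd m₁ m₂ h₁ h₂
  | single s k =>
    induction k with
    | zero => rw [single_zero]; exact hzero
    | succ k ih =>
      rw [single_add]
      refine hadd _ _ ih ?_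
      intro m' hm'
      rw [weight_single, one_smul]
      exact hX s m' hm'

lemma exists_mem_support_weight_add_le_of_mem_support_derivation
    (hX : ∀ s, ∀ m' ∈ (D (X s)).support, weight w m' + a ≤ w s + b)
    (hC : ∀ c : R, ∃ c' : R, D (C c) = C c') (hab : a ≤ b) (p : MvPolynomial σ R) :
    ∀ m' ∈ (D p).support, ∃ m ∈ p.support, weight w m' + a ≤ weight w m + b := by
  classical
  intro m' hm'
  conv at hm' => rw [p.as_sum, map_sum]
  obtain ⟨m, hm, hm'⟩ := Finset.mem_biUnion.mp (support_sum hm')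
  refine ⟨m, hm, ?_⟩
  obtain ⟨c', hc'⟩ := hC (coeff m p)
  rw [← mul_one (coeff m p), ← C_mul_monomial, Derivation.leibniz, hc', smul_eq_mul,
    smul_eq_mul, mul_comm _ (C c'), C_mul_monomial, mul_one] at hm'
  rcases Finset.mem_union.mp (support_add hm') with hm' | hm'
  · rw [C_apply] at hm'
    obtain ⟨m'', hm'', rfl⟩ := exists_mem_support_eq_add_of_mem_support_monomial_mul hm'
    simpa using weight_add_le_of_mem_support_derivation_monomial_one D w hX m m'' hm''
  · obtain rfl := Finset.mem_singleton.mp (support_monomial_subset hm')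
    omega

lemma weight_add_le_of_mem_support_derivation_iterate
    (hX : ∀ s, ∀ m' ∈ (D (X s)).support, weight w m' + a ≤ w s + b)
    (hC : ∀ c : R, ∃ c' : R, D (C c) = C c') (hab : a ≤ b) {p : MvPolynomial σ R} {N : ℕ}
    (hp : ∀ m ∈ p.support, weight w m ≤ N) (i : ℕ) :
    ∀ m ∈ (D^[i] p).support, weight w m + i * a ≤ N + i * b := by
  induction i with
  | zero => simpa using hp
  | succ i ih =>
    intro m hm
    rw [Function.iterate_succ_apply'] at hm
    obtain ⟨m₀, hm₀, hm⟩ :=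
      exists_mem_support_weight_add_le_of_mem_support_derivation D w hX hC hab _ m hm
    have := ih m₀ hm₀
    rw [add_mul, add_mul, one_mul, one_mul]
    omega

end MvPolynomial

lemma Finsupp.weight_sumElim_one_zero {ι κ : Type*} [Fintype ι] [Fintype κ] (m : ι ⊕ κ →₀ ℕ) :
    weight (Sum.elim 1 0) m = ∑ j, m (Sum.inl j) := by
  simp [weight_eq_sum, Fintype.sum_sum_type]

lemma Finsupp.weight_sumElim_zero_one {ι κ : Type*} [Fintype ι] [Fintype κ] (m : ι ⊕ κ →₀ ℕ) :
    weight (Sum.elim 0 1) m = ∑ j, m (Sum.inr j) := by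
  simp [weight_eq_sum, Fintype.sum_sum_type]

lemma sum_inl_le_degMu {K : Type*} [CommSemiring K] {r n : ℕ}
    {p : MvPolynomial (Fin r ⊕ Fin n) K} {m : Fin r ⊕ Fin n →₀ ℕ} (hm : m ∈ p.support) :
    ∑ j, m (Sum.inl j) ≤ degMu p :=
  Finset.le_sup (f := fun m => ∑ j, m (Sum.inl j)) hm

lemma sum_inr_le_degXv {K : Type*} [CommSemiring K] {r n : ℕ}
    {p : MvPolynomial (Fin r ⊕ Fin n) K} {m : Fin r ⊕ Fin n →₀ ℕ} (hm : m ∈ p.support) :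
    ∑ i, m (Sum.inr i) ≤ degXv p :=
  Finset.le_sup (f := fun m => ∑ i, m (Sum.inr i)) hm

lemma sum_inl_le_sup_degMu {K ι : Type*} [CommSemiring K] {r n : ℕ} (s : Finset ι)
    (g : ι → MvPolynomial (Fin r ⊕ Fin n) K) {k : ι} (hk : k ∈ s) {m : Fin r ⊕ Fin n →₀ ℕ}
    (hm : m ∈ (g k).support) : ∑ j, m (Sum.inl j) ≤ s.sup fun k => degMu (g k) :=
  (sum_inl_le_degMu hm).trans (Finset.le_sup (f := fun k => degMu (g k)) hk)

lemma sum_inr_le_sup_degXv {K ι : Type*} [CommSemiring K] {r n : ℕ} (s : Finset ι)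
    (g : ι → MvPolynomial (Fin r ⊕ Fin n) K) {k : ι} (hk : k ∈ s) {m : Fin r ⊕ Fin n →₀ ℕ}
    (hm : m ∈ (g k).support) : ∑ i, m (Sum.inr i) ≤ s.sup fun k => degXv (g k) :=
  (sum_inr_le_degXv hm).trans (Finset.le_sup (f := fun k => degXv (g k)) hk)

theorem stmt8_general {K : Type*} [Field K] [CharZero K] {r n : ℕ}
    (g : Fin n → MvPolynomial (Fin r ⊕ Fin n) K) (f : MvPolynomial (Fin r ⊕ Fin n) K)
    (L : Derivation ℚ (MvPolynomial (Fin r ⊕ Fin n) K) (MvPolynomial (Fin r ⊕ Fin n) K))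
    (hLx : ∀ i, L (X (Sum.inr i)) = g i)
    (hLmu : ∀ j, L (X (Sum.inl j)) = 0)
    (hLC : ∀ c : K, ∃ c' : K, L (C c) = C c')
    (dmu dx Dmu Dx : ℕ)
    (hdmu : dmu = degMu f) (hdx : dx = degXv f)
    (hDmu : Dmu = Finset.univ.sup fun i => degMu (g i))
    (hDx : Dx = Finset.univ.sup fun i => degXv (g i))
    (hDx1 : 1 ≤ Dx) :
    ∀ (i : ℕ), ∀ m ∈ ((⇑L)^[i] f).support,
      (∑ j : Fin r, m (Sum.inl j)) ≤ dmu + i * Dmu ∧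
        (∑ j : Fin n, m (Sum.inr j)) + i ≤ dx + i * Dx := by
  subst hdmu hdx hDmu hDx
  intro i m hm
  have hμ := weight_add_le_of_mem_support_derivation_iterate L (Sum.elim 1 0) (a := 0)
    (by
      rintro (j | k) m' hm'
      · simp [hLmu] at hm'
      · rw [hLx] at hm'
        simpa [weight_sumElim_one_zero] using
          sum_inl_le_sup_degMu _ g (Finset.mem_univ k) hm')
    hLC (Nat.zero_le _) (N := degMu f)
    (fun m hm => weight_sumElim_one_zero m ▸ sum_inl_le_degMu hm) i m hm
  have hx := weight_add_le_of_mem_support_derivation_iterate L (Sum.elim 0 1) (a := 1)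
    (by
      rintro (j | k) m' hm'
      · simp [hLmu] at hm'
      · rw [hLx] at hm'
        simpa [weight_sumElim_zero_one, add_comm 1] using
          sum_inr_le_sup_degXv _ g (Finset.mem_univ k) hm')
    hLC hDx1 (N := degXv f)
    (fun m hm => weight_sumElim_zero_one m ▸ sum_inr_le_degXv hm) i m hm
  rw [weight_sumElim_one_zero] at hμ
  rw [weight_sumElim_zero_one] at hx
  exact ⟨by simpa using hμ, by simpa using hx⟩

theorem stmt8 {K : Type*} [Field K] [CharZero K] {r n : ℕ} (hn : 1 ≤ n)
    (g : Fin n → MvPolynomial (Fin r ⊕ Fin n) K) (f : MvPolynomial (Fin r ⊕ Fin n) K)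
    (L : Derivation ℚ (MvPolynomial (Fin r ⊕ Fin n) K) (MvPolynomial (Fin r ⊕ Fin n) K))
    (hLx : ∀ i, L (X (Sum.inr i)) = g i)
    (hLmu : ∀ j, L (X (Sum.inl j)) = 0)
    (hLC : ∀ c : K, ∃ c' : K, L (C c) = C c')
    (dmu dx Dmu Dx : ℕ)
    (hdmu : dmu = degMu f) (hdx : dx = degXv f)
    (hDmu : Dmu = Finset.univ.sup fun i => degMu (g i))
    (hDx : Dx = Finset.univ.sup fun i => degXv (g i))
    (hDx1 : 1 ≤ Dx) :
    ∀ (i : ℕ), ∀ m ∈ ((⇑L)^[i] f).support,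
      (∑ j : Fin r, m (Sum.inl j)) ≤ dmu + i * Dmu ∧
        (∑ j : Fin n, m (Sum.inr j)) + i ≤ dx + i * Dx :=
  stmt8_general g f L hLx hLmu hLC dmu dx Dmu Dx hdmu hdx hDmu hDx hDx1
end

section
/- Define y : ℝ → ℝ by y(t) = tan(t)·tanh(t). Then for every t ∈ ℝ with cos(t) ≠ 0, writing y'(t) for the derivative of y at t and y''(t) for the derivative of y' at t, the following identity holds: y(t)^6 − y(t)^4·y''(t) + y(t)^4 + 2·y(t)^3·y'(t)^2 + (1/4)·(y(t)^2 − 1)·y''(t)^2 − y(t)^2 − y(t)·y'(t)^2·y''(t) − 2·y(t)·y'(t)^2 + y'(t)^4 + y''(t) − 1 = 0. -/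
/-!
Since `tan' = 1 + tan²` and `tanh' = 1 - tanh²`, the functions `y`, `y'` and `y''` are
polynomials in `T = tan t` and `H = tanh t`; substituting them turns the differential
relation into a polynomial identity that holds for arbitrary `T` and `H`.
-/

open Real Filter Topology

namespace Real

theorem hasDerivAt_tanh (x : ℝ) : HasDerivAt tanh (1 - tanh x ^ 2) x := by
  have hquot := (hasDerivAt_sinh x).div (hasDerivAt_cosh x) (cosh_pos x).ne'
  rw [show tanh = sinh / cosh from funext tanh_eq_sinh_div_cosh]
  refine hquot.congr_deriv ?_
  rw [Pi.div_apply]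
  field_simp

theorem hasDerivAt_tan_one_add_sq {x : ℝ} (h : cos x ≠ 0) :
    HasDerivAt tan (1 + tan x ^ 2) x := by
  convert hasDerivAt_tan h using 1
  rw [tan_eq_sin_div_cos]
  field_simp
  exact cos_sq_add_sin_sq x

end Real

theorem tan_mul_tanh_ode_polynomial_identity {R : Type*} [CommRing R] (T H y y' y'' : R)
    (hy : y = T * H) (hy' : y' = (1 + T ^ 2) * H + T * (1 - H ^ 2))
    (hy'' : y'' = 2 * T * (1 + T ^ 2) * H + 2 * (1 + T ^ 2) * (1 - H ^ 2)
      - 2 * T * H * (1 - H ^ 2)) :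
    4 * (y ^ 6 - y ^ 4 * y'' + y ^ 4 + 2 * y ^ 3 * y' ^ 2 - y ^ 2 - y * y' ^ 2 * y''
      - 2 * y * y' ^ 2 + y' ^ 4 + y'' - 1) + (y ^ 2 - 1) * y'' ^ 2 = 0 := by
  subst hy hy' hy''
  ring

theorem hasDerivAt_tan_mul_tanh {x : ℝ} (h : cos x ≠ 0) :
    HasDerivAt (fun t => tan t * tanh t)
      ((1 + tan x ^ 2) * tanh x + tan x * (1 - tanh x ^ 2)) x :=
  (hasDerivAt_tan_one_add_sq h).mul (hasDerivAt_tanh x)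

theorem hasDerivAt_deriv_tan_mul_tanh {x : ℝ} (h : cos x ≠ 0) :
    HasDerivAt (deriv fun t => tan t * tanh t)
      (2 * tan x * (1 + tan x ^ 2) * tanh x + 2 * (1 + tan x ^ 2) * (1 - tanh x ^ 2)
        - 2 * tan x * tanh x * (1 - tanh x ^ 2)) x := by
  have hderiv_eq : (deriv fun t => tan t * tanh t)
      =ᶠ[𝓝 x] fun t => (1 + tan t ^ 2) * tanh t + tan t * (1 - tanh t ^ 2) :=
    (continuous_cos.continuousAt.eventually_ne h).mono fun t ht =>
      (hasDerivAt_tan_mul_tanh ht).deriv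
  refine HasDerivAt.congr_of_eventuallyEq ?_ hderiv_eq
  have hT := hasDerivAt_tan_one_add_sq h
  have hH := hasDerivAt_tanh x
  refine ((((hT.pow 2).const_add 1).mul hH).add
    (hT.mul ((hH.pow 2).const_sub 1))).congr_deriv ?_
  simp only [Pi.pow_apply]
  push_cast
  ring

theorem stmt12 (y : ℝ → ℝ) (hy : y = fun t => Real.tan t * Real.tanh t) :
    ∀ t : ℝ, Real.cos t ≠ 0 →
      y t ^ 6 - y t ^ 4 * deriv (deriv y) t + y t ^ 4 + 2 * y t ^ 3 * deriv y t ^ 2 +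
          (1 / 4 : ℝ) * (y t ^ 2 - 1) * deriv (deriv y) t ^ 2 - y t ^ 2 -
          y t * deriv y t ^ 2 * deriv (deriv y) t - 2 * y t * deriv y t ^ 2 +
          deriv y t ^ 4 + deriv (deriv y) t - 1 = 0 := by
  intro t ht
  subst hy
  have key := tan_mul_tanh_ode_polynomial_identity (tan t) (tanh t) _ _ _ rfl
    (hasDerivAt_tan_mul_tanh ht).deriv (hasDerivAt_deriv_tan_mul_tanh ht).deriv
  linear_combination key / 4
end
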